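/- arXiv:1304.7336 — 4 statements merged into one kernel-verified Lean document; each statement's English description precedes it below -/
import Mathlib

section
/- Let A be a finite-dimensional n-Lie superalgebra. Then the Frattini subalgebra F(A) (the intersection of all maximal subalgebras of A) is contained in the derived subalgebra A^2 = [A,A,...,A]. In particular, if A is abelian then F(A) = 0. -/
/-- The sign `(-1)^t` for a parity `t ∈ ℤ/2`, as an element of the field `F`. -/
def superSgn (F : Type*) [Field F] (t : ZMod 2) : F := if t = 0 then 1 else -1

/-- An `n`-Lie superalgebra of parity `α` over a field `F`: a `ℤ/2`-graded vector space `A`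
with an `n`-linear bracket which is homogeneous of degree `α`, skew-supersymmetric, and
satisfies the super Filippov–Jacobi identity (every left multiplication operator is a
superderivation). -/
structure NLieSuper (F : Type*) (A : Type*) [Field F] [AddCommGroup A] [Module F A]
    (n : ℕ) (α : ZMod 2) where
  bracket : MultilinearMap F (fun _ : Fin n => A) A
  grading : ZMod 2 → Submodule F A
  internal : DirectSum.IsInternal grading
  bracket_grade : ∀ (x : Fin n → A) (g : Fin n → ZMod 2),
    (∀ i, x i ∈ grading (g i)) → bracket x ∈ grading (α + ∑ i, g i)
  skew : ∀ (x : Fin n → A) (g : Fin n → ZMod 2), (∀ i, x i ∈ grading (g i)) →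
    ∀ i j : Fin n, (i : ℕ) + 1 = (j : ℕ) →
      bracket (x ∘ Equiv.swap i j) = - (superSgn F (g i * g j)) • bracket x
  jacobi : ∀ (a : Fin n → A) (ga : Fin n → ZMod 2), (∀ l, a l ∈ grading (ga l)) →
    ∀ (b : Fin n → A) (gb : Fin n → ZMod 2), (∀ l, b l ∈ grading (gb l)) →
    ∀ i : Fin n,
      bracket (Function.update a i (bracket b)) =
      ∑ j : Fin n,
        (superSgn F ((∑ l ∈ Finset.univ.erase i, ga l) *
            (α + ∑ l ∈ Finset.univ.filter (fun l => l < j), gb l))) •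
          bracket (Function.update b j (bracket (Function.update a i (b j))))

namespace NLieSuper

variable {F A : Type*} [Field F] [AddCommGroup A] [Module F A] {n : ℕ} {α : ZMod 2}

/-- A graded subspace (`vector superspace`): `S = (S ⊓ A₀) ⊕ (S ⊓ A₁)`. -/
def IsGraded (L : NLieSuper F A n α) (S : Submodule F A) : Prop :=
  S ≤ (S ⊓ L.grading 0) ⊔ (S ⊓ L.grading 1)

/-- A subalgebra: a graded subspace closed under the bracket. -/
def IsSubalgebra (L : NLieSuper F A n α) (S : Submodule F A) : Prop :=
  L.IsGraded S ∧ ∀ x : Fin n → A, (∀ i, x i ∈ S) → L.bracket x ∈ S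

/-- An ideal: a graded subspace `I` with `[A,…,A,I] ⊆ I`. -/
def IsIdeal (L : NLieSuper F A n α) (S : Submodule F A) : Prop :=
  L.IsGraded S ∧ ∀ x : Fin n → A, (∃ i, x i ∈ S) → L.bracket x ∈ S

/-- `[A,…,A,M]`: the span of all brackets with at least one entry in `M`. -/
def amul (L : NLieSuper F A n α) (M : Submodule F A) : Submodule F A :=
  Submodule.span F {z | ∃ x : Fin n → A, (∃ i, x i ∈ M) ∧ z = L.bracket x}

/-- The lower central series: `lcs 0 = A¹ = A`, `lcs s = A^{s+1} = [A,…,A,A^s]`. -/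
def lcs (L : NLieSuper F A n α) : ℕ → Submodule F A
  | 0 => ⊤
  | s + 1 => L.amul (L.lcs s)

/-- `A` is nilpotent if the lower central series reaches `0`. -/
def IsNilpotentAlg (L : NLieSuper F A n α) : Prop := ∃ v, L.lcs v = ⊥

/-- The derived subalgebra `A² = [A,…,A]`. -/
def derived (L : NLieSuper F A n α) : Submodule F A := L.lcs 1

/-- Maximal subalgebras: proper subalgebras maximal among proper subalgebras. -/
def IsMaximalSubalgebra (L : NLieSuper F A n α) (S : Submodule F A) : Prop :=
  L.IsSubalgebra S ∧ S ≠ ⊤ ∧ ∀ T, L.IsSubalgebra T → S < T → T = ⊤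

/-- The Frattini subalgebra: the intersection of all maximal subalgebras. -/
def frattini (L : NLieSuper F A n α) : Submodule F A :=
  sInf {S | L.IsMaximalSubalgebra S}

end NLieSuper

/-!
Every subspace containing `A²` is closed under the bracket, and a hyperplane is maximal among
all subspaces, so every graded hyperplane containing `A²` is a maximal subalgebra. Since `A²` is
graded, for `x ∉ A²` some homogeneous component `x_i` of `x` lies outside `A²`, and a hyperplane
containing `A² + A_{1-i}` but not `x_i` is graded and misses `x`.
-/

section ComplementaryPair

variable {α : Type*} [Lattice α] [BoundedOrder α] [IsModularLattice α]

theorem Codisjoint.le_inf_sup_inf_of_le {p q S : α} (h : Codisjoint p q) (hq : q ≤ S) :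
    S ≤ S ⊓ p ⊔ S ⊓ q := calc
  S = (q ⊔ p) ⊓ S := by rw [h.symm.eq_top, top_inf_eq]
  _ = q ⊔ p ⊓ S := sup_inf_assoc_of_le p hq
  _ ≤ S ⊓ p ⊔ S ⊓ q := by rw [inf_comm p, inf_eq_right.mpr hq, sup_comm]

theorem sup_inf_le_of_le_inf_sup_inf {p q D : α} (hD : D ≤ D ⊓ p ⊔ D ⊓ q)
    (h : Disjoint q p) : (D ⊔ q) ⊓ p ≤ D := calc
  (D ⊔ q) ⊓ p ≤ (D ⊓ p ⊔ q) ⊓ p :=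
    inf_le_inf_right p (sup_le (hD.trans (sup_le_sup_left inf_le_right _)) le_sup_right)
  _ = D ⊓ p ⊔ q ⊓ p := sup_inf_assoc_of_le q inf_le_right
  _ ≤ D := by rw [h.eq_bot, sup_bot_eq]; exact inf_le_left

end ComplementaryPair

namespace Submodule

variable {K V : Type*} [DivisionRing K] [AddCommGroup V] [Module K V]

theorem exists_isCoatom_ge_of_notMem {E : Submodule K V} {x : V} (hx : x ∉ E) :
    ∃ H : Submodule K V, IsCoatom H ∧ E ≤ H ∧ x ∉ H := by
  obtain ⟨f, hfx, hfE⟩ := exists_dual_map_eq_bot_of_notMem hx inferInstance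
  have hf : Function.Surjective f := fun c =>
    ⟨(c * (f x)⁻¹) • x, by rw [map_smul, smul_eq_mul, inv_mul_cancel_right₀ hfx]⟩
  exact ⟨LinearMap.ker f, LinearMap.isCoatom_ker_of_surjective hf,
    LinearMap.le_ker_iff_map.mpr hfE, hfx⟩

variable {p q D : Submodule K V}

theorem exists_isCoatom_ge_sup_of_notMem (hD : D ≤ D ⊓ p ⊔ D ⊓ q) (hqp : Disjoint q p)
    {y z : V} (hy : y ∈ p) (hyD : y ∉ D) (hz : z ∈ q) :
    ∃ H : Submodule K V, IsCoatom H ∧ D ⊔ q ≤ H ∧ y + z ∉ H := by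
  have hy' : y ∉ D ⊔ q := fun h => hyD (sup_inf_le_of_le_inf_sup_inf hD hqp ⟨h, hy⟩)
  obtain ⟨H, hH, hle, hyH⟩ := exists_isCoatom_ge_of_notMem hy'
  exact ⟨H, hH, hle, (H.add_mem_iff_left (hle (mem_sup_right hz))).not.mpr hyH⟩

theorem exists_isCoatom_graded_of_notMem (h : IsCompl p q) (hD : D ≤ D ⊓ p ⊔ D ⊓ q)
    {x : V} (hx : x ∉ D) :
    ∃ H : Submodule K V, IsCoatom H ∧ D ≤ H ∧ x ∉ H ∧ H ≤ H ⊓ p ⊔ H ⊓ q := by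
  obtain ⟨y, hy, z, hz, rfl⟩ := mem_sup.mp (h.sup_eq_top ▸ mem_top : x ∈ p ⊔ q)
  by_cases hyD : y ∈ D
  · have hzD : z ∉ D := fun hzD => hx (D.add_mem hyD hzD)
    obtain ⟨H, hH, hle, hxH⟩ :=
      exists_isCoatom_ge_sup_of_notMem (sup_comm (D ⊓ p) _ ▸ hD) h.disjoint hz hzD hy
    refine ⟨H, hH, le_sup_left.trans hle, add_comm y z ▸ hxH, ?_⟩
    exact sup_comm (H ⊓ q) _ ▸ h.symm.codisjoint.le_inf_sup_inf_of_le (le_sup_right.trans hle)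
  · obtain ⟨H, hH, hle, hxH⟩ := exists_isCoatom_ge_sup_of_notMem hD h.symm.disjoint hy hyD hz
    exact ⟨H, hH, le_sup_left.trans hle, hxH,
      h.codisjoint.le_inf_sup_inf_of_le (le_sup_right.trans hle)⟩

end Submodule

namespace NLieSuper

variable {F A : Type*} [Field F] [AddCommGroup A] [Module F A] {n : ℕ} {α : ZMod 2}
  (L : NLieSuper F A n α)

theorem isCompl_grading : IsCompl (L.grading 0) (L.grading 1) :=
  L.internal.isCompl (by decide) (Set.eq_univ_of_forall (by decide)).symm

theorem exists_sum_homogeneous (x : A) :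
    ∃ c : ZMod 2 → A, (∀ t, c t ∈ L.grading t) ∧ ∑ t, c t = x := by
  have hx : x ∈ ⨆ t ∈ Finset.univ, L.grading t := by
    simp [L.internal.submodule_iSup_eq_top]
  obtain ⟨μ, hμ⟩ := (Submodule.mem_iSup_finset_iff_exists_sum _ _).mp hx
  exact ⟨fun t => μ t, fun t => (μ t).2, hμ⟩

theorem bracket_mem_derived (hn : 0 < n) (x : Fin n → A) : L.bracket x ∈ L.derived :=
  Submodule.subset_span ⟨x, ⟨⟨0, hn⟩, Submodule.mem_top⟩, rfl⟩

theorem derived_isGraded (hn : 0 < n) : L.IsGraded L.derived := by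
  refine Submodule.span_le.mpr ?_
  rintro _ ⟨x, -, rfl⟩
  choose c hc hsum using fun i => L.exists_sum_homogeneous (x i)
  rw [← funext hsum, MultilinearMap.map_sum]
  refine Submodule.sum_mem _ fun r _ => ?_
  have hgr := L.bracket_grade _ r fun i => hc i (r i)
  have hder := L.bracket_mem_derived hn fun i => c i (r i)
  generalize α + ∑ i, r i = t at hgr
  fin_cases t
  · exact Submodule.mem_sup_left ⟨hder, hgr⟩
  · exact Submodule.mem_sup_right ⟨hder, hgr⟩

theorem isMaximalSubalgebra_of_isCoatom (hn : 0 < n) {H : Submodule F A} (hH : IsCoatom H)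
    (hgr : L.IsGraded H) (hD : L.derived ≤ H) : L.IsMaximalSubalgebra H :=
  ⟨⟨hgr, fun x _ => hD (L.bracket_mem_derived hn x)⟩, hH.1, fun T _ hlt => hH.2 T hlt⟩

end NLieSuper

theorem frattini_le_derived_general {F A : Type*} [Field F] [AddCommGroup A] [Module F A]
    {n : ℕ} (hn : 2 ≤ n) {α : ZMod 2} (L : NLieSuper F A n α) :
    L.frattini ≤ L.derived ∧ (L.derived = ⊥ → L.frattini = ⊥) := by
  have hn₀ : 0 < n := by omega
  have hle : L.frattini ≤ L.derived := by
    intro x hx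
    by_contra hxD
    obtain ⟨H, hH, hDH, hxH, hgr⟩ :=
      Submodule.exists_isCoatom_graded_of_notMem L.isCompl_grading (L.derived_isGraded hn₀) hxD
    exact hxH (sInf_le (a := H) (L.isMaximalSubalgebra_of_isCoatom hn₀ hH hgr hDH) hx)
  exact ⟨hle, fun h => le_bot_iff.mp (h ▸ hle)⟩

/-- The Frattini subalgebra of a finite-dimensional `n`-Lie superalgebra is contained in
the derived subalgebra `A² = [A,…,A]`; in particular if `A` is abelian then `F(A) = 0`. -/
theorem frattini_le_derived {F A : Type*} [Field F] [AddCommGroup A] [Module F A]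
    [FiniteDimensional F A] {n : ℕ} (hn : 2 ≤ n) {α : ZMod 2} (L : NLieSuper F A n α) :
    L.frattini ≤ L.derived ∧ (L.derived = ⊥ → L.frattini = ⊥) :=
  frattini_le_derived_general hn L
end

section
/- Let A be a finite-dimensional nilpotent n-Lie superalgebra. Then every maximal subalgebra M of A is an ideal of A. -/
section Aux

variable {F A : Type*} [Field F] [AddCommGroup A] [Module F A] {n : ℕ} {α : ZMod 2}

lemma zmod2_cases (t : ZMod 2) : t = 0 ∨ t = 1 := by revert t; decide

lemma NLieSuper.decomp (L : NLieSuper F A n α) (a : A) :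
    ∃ a0 ∈ L.grading 0, ∃ a1 ∈ L.grading 1, a = a0 + a1 := by
  have htop : (⨆ t, L.grading t) = ⊤ := L.internal.submodule_iSup_eq_top
  have hsup : (⨆ t, L.grading t) = L.grading 0 ⊔ L.grading 1 := by
    apply le_antisymm
    · exact iSup_le fun t => by
        rcases zmod2_cases t with h | h <;> rw [h]
        · exact le_sup_left
        · exact le_sup_right
    · exact sup_le (le_iSup _ 0) (le_iSup _ 1)
  have ha : a ∈ L.grading 0 ⊔ L.grading 1 := by
    rw [← hsup, htop]; trivial
  rcases Submodule.mem_sup.mp ha with ⟨a0, h0, a1, h1, h⟩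
  exact ⟨a0, h0, a1, h1, h.symm⟩

lemma NLieSuper.bracket_mem_amul_top (L : NLieSuper F A n α) (hn : 2 ≤ n) (x : Fin n → A) :
    L.bracket x ∈ L.amul ⊤ :=
  Submodule.subset_span ⟨x, ⟨⟨0, by omega⟩, trivial⟩, rfl⟩

lemma NLieSuper.isGraded_amul_top (L : NLieSuper F A n α) (hn : 2 ≤ n) :
    L.IsGraded (L.amul ⊤) := by
  unfold NLieSuper.IsGraded
  apply Submodule.span_le.mpr
  rintro z ⟨x, -, rfl⟩
  choose a0 h0 a1 h1 hx using fun i => L.decomp (x i)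
  have hxeq : x = a0 + a1 := funext fun i => hx i
  rw [hxeq, MultilinearMap.map_add_univ]
  apply Submodule.sum_mem
  intro s _
  set g : Fin n → ZMod 2 := fun i => if i ∈ s then 0 else 1 with hg
  have hhom : ∀ i, (s.piecewise a0 a1) i ∈ L.grading (g i) := by
    intro i
    by_cases hi : i ∈ s
    · rw [s.piecewise_eq_of_mem _ _ hi]; simp only [hg, if_pos hi]; exact h0 i
    · rw [s.piecewise_eq_of_notMem _ _ hi]; simp only [hg, if_neg hi]; exact h1 i
  have hgr := L.bracket_grade _ g hhom
  have hA : L.bracket (s.piecewise a0 a1) ∈ L.amul ⊤ := L.bracket_mem_amul_top hn _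
  rcases zmod2_cases (α + ∑ i, g i) with h | h <;> rw [h] at hgr
  · exact Submodule.mem_sup_left ⟨hA, hgr⟩
  · exact Submodule.mem_sup_right ⟨hA, hgr⟩

end Aux

/-- In a finite-dimensional nilpotent `n`-Lie superalgebra, every maximal subalgebra
is an ideal. -/
theorem maximal_subalgebra_isIdeal_of_nilpotent {F A : Type*} [Field F] [AddCommGroup A]
    [Module F A] [FiniteDimensional F A] {n : ℕ} (hn : 2 ≤ n) {α : ZMod 2}
    (L : NLieSuper F A n α) (hnil : L.IsNilpotentAlg)
    (M : Submodule F A) (hM : L.IsMaximalSubalgebra M) : L.IsIdeal M := by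
  -- Step 1: the derived subalgebra is contained in M.
  have hlcs0 : L.lcs 0 = (⊤ : Submodule F A) := rfl
  have hder : L.derived = L.amul ⊤ := rfl
  have hsub : L.derived ≤ M := by
    by_contra hnot
    -- M ⊔ A² is a proper-or-top subalgebra strictly containing M
    have hT : L.IsSubalgebra (M ⊔ L.derived) := by
      constructor
      · intro z hz
        rcases Submodule.mem_sup.mp hz with ⟨m, hm, d, hd, rfl⟩
        have hle : L.amul ⊤ ≤ M ⊔ L.derived := by rw [hder]; exact le_sup_right
        have hmono1 : (M ⊓ L.grading 0) ⊔ (M ⊓ L.grading 1) ≤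
            ((M ⊔ L.derived) ⊓ L.grading 0) ⊔ ((M ⊔ L.derived) ⊓ L.grading 1) :=
          sup_le_sup (inf_le_inf_right _ le_sup_left) (inf_le_inf_right _ le_sup_left)
        have hmono2 : (L.amul ⊤ ⊓ L.grading 0) ⊔ (L.amul ⊤ ⊓ L.grading 1) ≤
            ((M ⊔ L.derived) ⊓ L.grading 0) ⊔ ((M ⊔ L.derived) ⊓ L.grading 1) :=
          sup_le_sup (inf_le_inf_right _ hle) (inf_le_inf_right _ hle)
        have hd' : d ∈ L.amul ⊤ := by rw [← hder]; exact hd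
        have h1 := hmono1 (hM.1.1 hm)
        have h2 := hmono2 ((L.isGraded_amul_top hn) hd')
        exact Submodule.add_mem _ h1 h2
      · intro x _
        exact Submodule.mem_sup_right (hder ▸ L.bracket_mem_amul_top hn x)
    have hlt : M < M ⊔ L.derived := left_lt_sup.mpr hnot
    have htop : M ⊔ L.derived = ⊤ := hM.2.2 _ hT hlt
    -- Step 2: by nilpotency, M ⊔ lcs s = ⊤ for all s
    have hstep : ∀ s, M ⊔ L.lcs s = ⊤ := by
      intro s
      induction s with
      | zero => rw [hlcs0]; exact sup_top_eq M
      | succ s ih =>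
        have hA2 : L.derived ≤ M ⊔ L.lcs (s + 1) := by
          rw [hder]
          apply Submodule.span_le.mpr
          rintro z ⟨x, -, rfl⟩
          have hx : ∀ i, x i ∈ M ⊔ L.lcs s := fun i => by rw [ih]; trivial
          choose m hm w hw hmw using fun i => Submodule.mem_sup.mp (hx i)
          have hxeq : x = m + w := funext fun i => (hmw i).symm
          rw [hxeq, MultilinearMap.map_add_univ]
          apply Submodule.sum_mem
          intro s' _
          by_cases hs' : s' = Finset.univ
          · subst hs'
            have : ∀ i, (Finset.univ.piecewise m w) i ∈ M := by
              intro i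
              rw [Finset.piecewise_eq_of_mem _ _ _ (Finset.mem_univ i)]
              exact hm i
            exact Submodule.mem_sup_left (hM.1.2 _ this)
          · obtain ⟨i, hi⟩ : ∃ i, i ∉ s' := by
              by_contra h
              push_neg at h
              exact hs' (Finset.eq_univ_of_forall h)
            apply Submodule.mem_sup_right
            apply Submodule.subset_span
            refine ⟨_, ⟨i, ?_⟩, rfl⟩
            rw [Finset.piecewise_eq_of_notMem _ _ _ hi]
            exact hw i
        have hle : (⊤ : Submodule F A) ≤ M ⊔ L.lcs (s + 1) := by
          calc (⊤ : Submodule F A) = M ⊔ L.derived := htop.symm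
            _ ≤ M ⊔ (M ⊔ L.lcs (s + 1)) := sup_le_sup_left hA2 M
            _ = M ⊔ L.lcs (s + 1) := by rw [← sup_assoc, sup_idem]
        exact le_antisymm le_top hle
    obtain ⟨v, hv⟩ := hnil
    have : M = ⊤ := by have := hstep v; rwa [hv, sup_bot_eq] at this
    exact hM.2.1 this
  -- Step 3: M is an ideal
  exact ⟨hM.1.1, fun x _ => hsub (hder ▸ L.bracket_mem_amul_top hn x)⟩
end

section
/- Let A be a nonzero finite-dimensional n-Lie superalgebra and V a maximal subalgebra of A that is not an ideal of A. Then the invariance number of A is strictly greater than the invariance number of V: v(A) > v(V). -/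
namespace NLieSuper

variable {F A : Type*} [Field F] [AddCommGroup A] [Module F A] {n : ℕ} {α : ZMod 2}

/-- `S` is an ideal in `T`: `S ⊆ T` and `[T,…,T,S] ⊆ S`. -/
def IsIdealIn (L : NLieSuper F A n α) (T S : Submodule F A) : Prop :=
  S ≤ T ∧ ∀ x : Fin n → A, (∀ i, x i ∈ T) → (∃ i, x i ∈ S) → L.bracket x ∈ S

/-- `S` is subinvariant in `T`: there is a finite chain `T = c₀ ⊵ c₁ ⊵ … ⊵ c_r = S`
with each term an ideal in the preceding one. -/
def SubinvariantIn (L : NLieSuper F A n α) (T S : Submodule F A) : Prop :=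
  ∃ (r : ℕ) (c : ℕ → Submodule F A),
    c 0 = T ∧ c r = S ∧ ∀ i < r, L.IsIdealIn (c i) (c (i + 1))

/-- `S` is a maximal subalgebra of `T`: a subalgebra strictly below `T` with no subalgebra
strictly in between. -/
def MaximalIn (L : NLieSuper F A n α) (T S : Submodule F A) : Prop :=
  L.IsSubalgebra S ∧ S < T ∧ ∀ U, L.IsSubalgebra U → S < U → U ≤ T → U = T

/-- An upper chain of length `k` in `T`: `T = U₀ ⊃ U₁ ⊃ … ⊃ U_k`, each `U_{i+1}` maximal
in `U_i`. -/
def IsUpperChain (L : NLieSuper F A n α) (T : Submodule F A) (k : ℕ)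
    (U : ℕ → Submodule F A) : Prop :=
  U 0 = T ∧ ∀ i < k, L.MaximalIn (U i) (U (i + 1))

open scoped Classical in
/-- The subinvariance number of an upper chain in `T`: the number of `U_i ≠ U_0 = T`
that are subinvariant in `T`. -/
noncomputable def sNum (L : NLieSuper F A n α) (T : Submodule F A) (k : ℕ)
    (U : ℕ → Submodule F A) : ℕ :=
  ((Finset.Icc 1 k).filter (fun i => L.SubinvariantIn T (U i))).card

/-- The invariance number of an upper chain: `k - s` if `s ≠ 0`, and `k` otherwise. -/
noncomputable def vChain (L : NLieSuper F A n α) (T : Submodule F A) (k : ℕ)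
    (U : ℕ → Submodule F A) : ℕ :=
  if L.sNum T k U = 0 then k else k - L.sNum T k U

/-- The invariance number of `T`: the maximum of invariance numbers over all upper chains
in `T`. -/
noncomputable def vNum (L : NLieSuper F A n α) (T : Submodule F A) : ℕ :=
  sSup {m | ∃ k U, L.IsUpperChain T k U ∧ m = L.vChain T k U}

end NLieSuper

/-! Prepending `A` to an upper chain of `V` realising `v(V)` gives an upper chain of `A` that is
one step longer. Its subinvariant members are subinvariant in `V` as well (intersect the
defining series with `V`), and its first proper member `V` is not subinvariant in `A`: the
first proper term of a subinvariant series from `A` down to `V` is an ideal of `A`, its graded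
part is then a graded ideal containing `V`, hence a subalgebra equal to `V` by maximality, and
`V` would be an ideal. So the longer chain has at most as many subinvariant members, and its
invariance number is larger. -/

namespace NLieSuper

variable {F A : Type*} [Field F] [AddCommGroup A] [Module F A] {n : ℕ} {α : ZMod 2}
  (L : NLieSuper F A n α)

/-- The largest graded subspace contained in `M`. -/
def gradedCore (M : Submodule F A) : Submodule F A :=
  (M ⊓ L.grading 0) ⊔ (M ⊓ L.grading 1)

lemma gradedCore_le (M : Submodule F A) : L.gradedCore M ≤ M :=
  sup_le inf_le_left inf_le_left

lemma gradedCore_mono {M N : Submodule F A} (h : M ≤ N) : L.gradedCore M ≤ L.gradedCore N :=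
  sup_le_sup (inf_le_inf_right _ h) (inf_le_inf_right _ h)

lemma isGraded_gradedCore (M : Submodule F A) : L.IsGraded (L.gradedCore M) :=
  sup_le (le_sup_of_le_left (le_inf le_sup_left inf_le_right))
    (le_sup_of_le_right (le_inf le_sup_right inf_le_right))

lemma le_gradedCore {S M : Submodule F A} (hS : L.IsGraded S) (h : S ≤ M) :
    S ≤ L.gradedCore M :=
  hS.trans (L.gradedCore_mono h)

lemma inf_grading_le_gradedCore (M : Submodule F A) (t : ZMod 2) :
    M ⊓ L.grading t ≤ L.gradedCore M := by
  fin_cases t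
  · exact le_sup_left
  · exact le_sup_right

lemma gradedCore_top : L.gradedCore ⊤ = ⊤ := by
  refine eq_top_iff.mpr (L.internal.submodule_iSup_eq_top.symm.le.trans (iSup_le fun t => ?_))
  simpa using L.inf_grading_le_gradedCore ⊤ t

lemma bracket_mem_gradedCore {P : Fin n → Submodule F A} {Q : Submodule F A}
    (hPQ : ∀ y : Fin n → A, (∀ i, y i ∈ P i) → L.bracket y ∈ Q) {x : Fin n → A}
    (hx : ∀ i, x i ∈ L.gradedCore (P i)) : L.bracket x ∈ L.gradedCore Q := by
  choose a ha b hb hab using fun i => Submodule.mem_sup.mp (hx i)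
  obtain rfl : x = a + b := funext fun i => (hab i).symm
  -- multilinearity splits `[a + b]` into brackets of homogeneous families
  rw [L.bracket.map_add_univ]
  refine Submodule.sum_mem _ fun s _ => L.inf_grading_le_gradedCore Q _
    ⟨hPQ _ fun i => ?_, L.bracket_grade _ (fun i => if i ∈ s then 0 else 1) fun i => ?_⟩
  all_goals by_cases hi : i ∈ s <;> simp only [hi, Finset.piecewise_eq_of_mem,
    Finset.piecewise_eq_of_notMem, if_true, if_false, not_false_eq_true]
  exacts [(ha i).1, (hb i).1, (ha i).2, (hb i).2]

variable {L}

lemma IsIdealIn.gradedCore {T S : Submodule F A} (h : L.IsIdealIn T S) :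
    L.IsIdealIn (L.gradedCore T) (L.gradedCore S) := by
  refine ⟨L.gradedCore_mono h.1, ?_⟩
  rintro x hxT ⟨i₀, hxS⟩
  refine L.bracket_mem_gradedCore (P := Function.update (fun _ => T) i₀ S)
    (fun y hy => h.2 y (fun i => ?_) ⟨i₀, by simpa using hy i₀⟩) (fun i => ?_)
  all_goals by_cases hi : i = i₀
  · subst hi; exact h.1 (by simpa using hy i)
  · simpa [hi] using hy i
  · subst hi; simpa using hxS
  · simpa [hi] using hxT i

lemma isIdeal_of_isIdealIn_top {S : Submodule F A} (hS : L.IsGraded S) (h : L.IsIdealIn ⊤ S) :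
    L.IsIdeal S :=
  ⟨hS, fun x hx => h.2 x (fun _ => trivial) hx⟩

lemma IsIdeal.isSubalgebra (hn : 0 < n) {S : Submodule F A} (h : L.IsIdeal S) :
    L.IsSubalgebra S :=
  ⟨h.1, fun x hx => h.2 x ⟨⟨0, hn⟩, hx _⟩⟩

lemma exists_isIdealIn_top_of_subinvariantIn_top {S : Submodule F A}
    (hS : L.SubinvariantIn ⊤ S) (hne : S ≠ ⊤) :
    ∃ I, L.IsIdealIn ⊤ I ∧ S ≤ I ∧ I ≠ ⊤ := by
  obtain ⟨r, c, hc0, rfl, hc⟩ := hS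
  induction r with
  | zero => exact absurd hc0 hne
  | succ r ih =>
    by_cases htop : c r = ⊤
    · exact ⟨c (r + 1), htop ▸ hc r r.lt_succ_self, le_rfl, hne⟩
    · obtain ⟨I, hI, hrI, hIne⟩ := ih (fun i hi => hc i (by omega)) htop
      exact ⟨I, hI, (hc r r.lt_succ_self).1.trans hrI, hIne⟩

lemma IsMaximalSubalgebra.isIdeal_of_subinvariantIn_top (hn : 0 < n) {V : Submodule F A}
    (hV : L.IsMaximalSubalgebra V) (hsub : L.SubinvariantIn ⊤ V) : L.IsIdeal V := by
  obtain ⟨I, hI, hVI, hIne⟩ := exists_isIdealIn_top_of_subinvariantIn_top hsub hV.2.1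
  have hJ : L.IsIdeal (L.gradedCore I) :=
    isIdeal_of_isIdealIn_top (L.isGraded_gradedCore I) (L.gradedCore_top ▸ hI.gradedCore)
  have hJV : L.gradedCore I = V := by
    by_contra hne
    have hJtop := hV.2.2 _ (hJ.isSubalgebra hn)
      (lt_of_le_of_ne (L.le_gradedCore hV.1.1 hVI) (Ne.symm hne))
    exact hIne (top_le_iff.mp (hJtop ▸ L.gradedCore_le I))
  exact hJV ▸ hJ

lemma SubinvariantIn.restrict {T U V : Submodule F A} (hU : L.SubinvariantIn T U)
    (hV : L.IsSubalgebra V) (hUV : U ≤ V) (hVT : V ≤ T) : L.SubinvariantIn V U := by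
  obtain ⟨r, c, hc0, hcr, hc⟩ := hU
  refine ⟨r, fun i => c i ⊓ V, by simpa [hc0], by simpa [hcr], fun i hi => ?_⟩
  refine ⟨inf_le_inf_right _ (hc i hi).1, fun x hx ⟨j, hj⟩ => ⟨?_, ?_⟩⟩
  · exact (hc i hi).2 x (fun l => (hx l).1) ⟨j, hj.1⟩
  · exact hV.2 x fun l => (hx l).2

lemma IsMaximalSubalgebra.maximalIn_top {V : Submodule F A} (hV : L.IsMaximalSubalgebra V) :
    L.MaximalIn ⊤ V :=
  ⟨hV.1, lt_top_iff_ne_top.mpr hV.2.1, fun W hW hVW _ => hV.2.2 W hW hVW⟩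

def chainCons (T : Submodule F A) (U : ℕ → Submodule F A) : ℕ → Submodule F A
  | 0 => T
  | i + 1 => U i

lemma IsUpperChain.cons {T V : Submodule F A} {k : ℕ} {U : ℕ → Submodule F A}
    (hU : L.IsUpperChain V k U) (hV : L.MaximalIn T V) :
    L.IsUpperChain T (k + 1) (chainCons T U) := by
  refine ⟨rfl, fun i hi => ?_⟩
  cases i with
  | zero => show L.MaximalIn T (U 0); rwa [hU.1]
  | succ i => exact hU.2 i (by omega)

lemma IsUpperChain.le {T : Submodule F A} {k : ℕ} {U : ℕ → Submodule F A}
    (hU : L.IsUpperChain T k U) : ∀ i ≤ k, U i ≤ T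
  | 0, _ => hU.1.le
  | i + 1, hi => (hU.2 i (by omega)).2.1.le.trans (hU.le i (by omega))

lemma IsUpperChain.length_le_finrank [FiniteDimensional F A] {T : Submodule F A} {k : ℕ}
    {U : ℕ → Submodule F A} (hU : L.IsUpperChain T k U) : k ≤ Module.finrank F A := by
  have key : ∀ i ≤ k, Module.finrank F (U i) + i ≤ Module.finrank F T := by
    intro i
    induction i with
    | zero => intro _; rw [hU.1, add_zero]
    | succ i ih =>
      intro hik
      have := Submodule.finrank_lt_finrank_of_lt (hU.2 i (by omega)).2.1
      have := ih (by omega)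
      omega
  have := key k le_rfl
  have := Submodule.finrank_le T
  omega

lemma sNum_le (T : Submodule F A) (k : ℕ) (U : ℕ → Submodule F A) : L.sNum T k U ≤ k := by
  classical
  unfold sNum
  exact (Finset.card_filter_le _ _).trans (by simp)

lemma sNum_chainCons_le {T V : Submodule F A} {k : ℕ} {U : ℕ → Submodule F A}
    (h₀ : ¬ L.SubinvariantIn T (U 0))
    (h : ∀ i ≤ k, L.SubinvariantIn T (U i) → L.SubinvariantIn V (U i)) :
    L.sNum T (k + 1) (chainCons T U) ≤ L.sNum V k U := by
  unfold sNum
  refine Finset.card_le_card_of_injOn (· - 1) (fun i hi => ?_) fun i hi j hj hij => ?_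
  · simp only [Finset.coe_filter, Finset.mem_Icc, Set.mem_ofPred_eq] at hi ⊢
    obtain ⟨⟨hi1, hik⟩, hsub⟩ := hi
    obtain ⟨i, rfl⟩ := Nat.exists_eq_add_of_le' hi1
    have hi0 : i ≠ 0 := by rintro rfl; exact h₀ hsub
    exact ⟨⟨by omega, by omega⟩, h i (by omega) hsub⟩
  · simp only [Finset.coe_filter, Finset.mem_Icc, Set.mem_ofPred_eq] at hi hj hij
    omega

lemma vChain_le (T : Submodule F A) (k : ℕ) (U : ℕ → Submodule F A) : L.vChain T k U ≤ k := by
  unfold vChain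
  split <;> omega

lemma vChain_lt_vChain_succ {T T' : Submodule F A} {k : ℕ} {U U' : ℕ → Submodule F A}
    (h : L.sNum T' (k + 1) U' ≤ L.sNum T k U) : L.vChain T k U < L.vChain T' (k + 1) U' := by
  have := L.sNum_le T k U
  unfold vChain
  split_ifs <;> omega

lemma bddAbove_vChain [FiniteDimensional F A] (T : Submodule F A) :
    BddAbove {m | ∃ k U, L.IsUpperChain T k U ∧ m = L.vChain T k U} := by
  refine ⟨Module.finrank F A, ?_⟩
  rintro m ⟨k, U, hU, rfl⟩
  exact (L.vChain_le T k U).trans hU.length_le_finrank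

lemma IsUpperChain.vChain_le_vNum [FiniteDimensional F A] {T : Submodule F A} {k : ℕ}
    {U : ℕ → Submodule F A} (hU : L.IsUpperChain T k U) : L.vChain T k U ≤ L.vNum T :=
  le_csSup (L.bddAbove_vChain T) ⟨k, U, hU, rfl⟩

lemma exists_isUpperChain_vChain_eq_vNum [FiniteDimensional F A] (T : Submodule F A) :
    ∃ k U, L.IsUpperChain T k U ∧ L.vNum T = L.vChain T k U := by
  have htriv : L.IsUpperChain T 0 fun _ => T := ⟨rfl, fun _ hi => absurd hi (Nat.not_lt_zero _)⟩
  exact Nat.sSup_mem (s := {m | ∃ k U, L.IsUpperChain T k U ∧ m = L.vChain T k U})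
    ⟨_, 0, _, htriv, rfl⟩ (L.bddAbove_vChain T)

end NLieSuper

theorem vNum_lt_of_maximal_not_ideal_general {F A : Type*} [Field F] [AddCommGroup A]
    [Module F A] [FiniteDimensional F A] {n : ℕ} (hn : 2 ≤ n) {α : ZMod 2}
    (L : NLieSuper F A n α) (V : Submodule F A) (hV : L.IsMaximalSubalgebra V)
    (hnotideal : ¬ L.IsIdeal V) : L.vNum V < L.vNum ⊤ := by
  obtain ⟨k, U, hU, hval⟩ := L.exists_isUpperChain_vChain_eq_vNum V
  have hV₀ : ¬ L.SubinvariantIn ⊤ (U 0) :=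
    hU.1 ▸ fun h => hnotideal (hV.isIdeal_of_subinvariantIn_top (by omega) h)
  have hs : L.sNum ⊤ (k + 1) (NLieSuper.chainCons ⊤ U) ≤ L.sNum V k U :=
    NLieSuper.sNum_chainCons_le hV₀ fun i hi h => h.restrict hV.1 (hU.le i hi) le_top
  calc L.vNum V = L.vChain V k U := hval
    _ < L.vChain ⊤ (k + 1) (NLieSuper.chainCons ⊤ U) := NLieSuper.vChain_lt_vChain_succ hs
    _ ≤ L.vNum ⊤ := (hU.cons hV.maximalIn_top).vChain_le_vNum

/-- If `V` is a maximal subalgebra of a nonzero finite-dimensional `n`-Lie superalgebra `A`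
which is not an ideal of `A`, then `v(A) > v(V)`. -/
theorem vNum_lt_of_maximal_not_ideal {F A : Type*} [Field F] [AddCommGroup A]
    [Module F A] [FiniteDimensional F A] [Nontrivial A] {n : ℕ} (hn : 2 ≤ n) {α : ZMod 2}
    (L : NLieSuper F A n α) (V : Submodule F A) (hV : L.IsMaximalSubalgebra V)
    (hnotideal : ¬ L.IsIdeal V) : L.vNum V < L.vNum ⊤ :=
  vNum_lt_of_maximal_not_ideal_general hn L V hV hnotideal
end

section
/- Let A be a finite-dimensional nilpotent n-Lie superalgebra and N a nonzero subalgebra whose normal closure N^A (the smallest ideal of A containing N) equals A. Then N = A. -/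
namespace NLieSuper

variable {F A : Type*} [Field F] [AddCommGroup A] [Module F A] {n : ℕ} {α : ZMod 2}

/-- The normal closure of a set of elements spanning `S`: the smallest ideal of `A`
containing `S`. -/
def normalClosure (L : NLieSuper F A n α) (S : Submodule F A) : Submodule F A :=
  sInf {I | L.IsIdeal I ∧ S ≤ I}

end NLieSuper

/-- In a finite-dimensional nilpotent `n`-Lie superalgebra, a nonzero subalgebra `N` whose
normal closure `N^A` equals `A` must be all of `A`. -/
theorem eq_top_of_normalClosure_eq_top {F A : Type*} [Field F] [AddCommGroup A]
    [Module F A] [FiniteDimensional F A] {n : ℕ} (hn : 2 ≤ n) {α : ZMod 2}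
    (L : NLieSuper F A n α) (hnil : L.IsNilpotentAlg)
    (N : Submodule F A) (hN : L.IsSubalgebra N) (hne : N ≠ ⊥)
    (hclosure : L.normalClosure N = ⊤) : N = ⊤ := by
  classical
  -- every bracket lies in `lcs 1`
  have hbr1 : ∀ x : Fin n → A, L.bracket x ∈ L.lcs 1 := fun x =>
    Submodule.subset_span ⟨x, ⟨⟨0, by omega⟩, trivial⟩, rfl⟩
  -- the grading spans everything
  have hgr : L.grading 0 ⊔ L.grading 1 = ⊤ := by
    have h := L.internal.submodule_iSup_eq_top
    refine le_antisymm le_top ?_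
    rw [← h]
    refine iSup_le fun t => ?_
    fin_cases t
    · exact le_sup_left
    · exact le_sup_right
  -- `lcs 1` is graded
  have hgraded1 : L.IsGraded (L.lcs 1) := by
    intro z hz
    refine Submodule.span_induction ?_ (Submodule.zero_mem _)
      (fun a b _ _ ha hb => Submodule.add_mem _ ha hb)
      (fun c a _ ha => Submodule.smul_mem _ c ha) hz
    rintro z ⟨x, -, rfl⟩
    have hx : ∀ i, ∃ c0 ∈ L.grading 0, ∃ c1 ∈ L.grading 1, c0 + c1 = x i := fun i => by
      have : x i ∈ L.grading 0 ⊔ L.grading 1 := by rw [hgr]; trivial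
      exact Submodule.mem_sup.mp this
    choose c0 hc0 c1 hc1 hc using hx
    have hxeq : x = (fun i => c0 i) + fun i => c1 i := funext fun i => (hc i).symm
    rw [hxeq, MultilinearMap.map_add_univ]
    refine Submodule.sum_mem _ fun s _ => ?_
    set g : Fin n → ZMod 2 := fun i => if i ∈ s then 0 else 1 with hg
    have hmemg : ∀ i, (s.piecewise (fun i => c0 i) fun i => c1 i) i ∈ L.grading (g i) := by
      intro i
      by_cases hi : i ∈ s <;> simp [Finset.piecewise, hi, hg, hc0 i, hc1 i]
    have h1 := L.bracket_grade _ g hmemg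
    have h2 := hbr1 (s.piecewise (fun i => c0 i) fun i => c1 i)
    rcases (show ∀ t : ZMod 2, t = 0 ∨ t = 1 by decide) (α + ∑ i, g i) with ht | ht
    · exact Submodule.mem_sup_left ⟨h2, ht ▸ h1⟩
    · exact Submodule.mem_sup_right ⟨h2, ht ▸ h1⟩
  -- `N ⊔ lcs 1` is an ideal containing `N`
  have hmono : ∀ (S T : Submodule F A), S ≤ T →
      (S ⊓ L.grading 0) ⊔ (S ⊓ L.grading 1) ≤ (T ⊓ L.grading 0) ⊔ (T ⊓ L.grading 1) :=
    fun S T h => sup_le_sup (inf_le_inf_right _ h) (inf_le_inf_right _ h)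
  have hideal : L.IsIdeal (N ⊔ L.lcs 1) := by
    constructor
    · intro z hz
      rw [Submodule.mem_sup] at hz
      obtain ⟨a, ha, b, hb, rfl⟩ := hz
      exact Submodule.add_mem _ (hmono _ _ le_sup_left (hN.1 ha))
        (hmono _ _ le_sup_right (hgraded1 hb))
    · intro x _
      exact Submodule.mem_sup_right (hbr1 x)
  have htop1 : N ⊔ L.lcs 1 = ⊤ := by
    refine top_unique ?_
    rw [← hclosure]
    exact sInf_le ⟨hideal, le_sup_left⟩
  -- the key induction
  have key : ∀ s, N ⊔ L.lcs s = ⊤ := by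
    intro s
    induction s with
    | zero => simp [NLieSuper.lcs]
    | succ s ih =>
      have h1 : L.lcs 1 ≤ N ⊔ L.lcs (s + 1) := by
        refine Submodule.span_le.mpr ?_
        rintro z ⟨x, -, rfl⟩
        have hx : ∀ i, ∃ m ∈ N, ∃ w ∈ L.lcs s, m + w = x i := fun i => by
          have : x i ∈ N ⊔ L.lcs s := by rw [ih]; trivial
          exact Submodule.mem_sup.mp this
        choose m hm w hw hmw using hx
        have hxeq : x = (fun i => m i) + fun i => w i := funext fun i => (hmw i).symm
        rw [SetLike.mem_coe, hxeq, MultilinearMap.map_add_univ]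
        refine Submodule.sum_mem _ fun t _ => ?_
        by_cases ht : t = Finset.univ
        · subst ht
          rw [Finset.piecewise_univ]
          exact Submodule.mem_sup_left (hN.2 _ hm)
        · obtain ⟨i, hi⟩ := Finset.not_subset.mp fun h => ht (Finset.univ_subset_iff.mp h)
          refine Submodule.mem_sup_right ?_
          refine Submodule.subset_span ⟨_, ⟨i, ?_⟩, rfl⟩
          simp [Finset.piecewise, hi.2, hw i]
      have := sup_le_sup_left h1 N
      rw [htop1, ← sup_assoc, sup_idem] at this
      exact top_unique this
  obtain ⟨v, hv⟩ := hnil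
  have := key v
  rwa [hv, sup_bot_eq] at this
end
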